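/- arXiv:2202.04296 — 5 statements merged into one kernel-verified Lean document; each statement's English description precedes it below -/
import Mathlib

section
/- For any x in a closed convex set X and any vector z, the squared gradient mapping satisfies ‖G_X(x, ∇F(x), β)‖² ≤ -4β·η(x,z) + 2‖∇F(x) - z‖², where η(x,z) = min_{y∈X} (⟨z, y-x⟩ + (β/2)‖y-x‖²) and G_X(x, g, β) = β(x - proj_X(x - g/β)). -/
set_option maxHeartbeats 1000000


open scoped RealInnerProductSpace BigOperators

noncomputable section

/-- For any `x` in a closed convex set `X` and any vector `z`, the squared
gradient mapping satisfies `‖G_X(x, ∇F(x), β)‖² ≤ -4β·η(x,z) + 2‖∇F(x) - z‖²`, where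
`η(x,z) = min_{y∈X} (⟨z, y-x⟩ + (β/2)‖y-x‖²)` and `G_X(x,g,β) = β(x - proj_X(x - g/β))`. -/
theorem stmt0 {n : ℕ} (X : Set (EuclideanSpace ℝ (Fin n)))
    (hXne : X.Nonempty) (hXcl : IsClosed X) (hXconv : Convex ℝ X)
    (β : ℝ) (hβ : 0 < β)
    (F : EuclideanSpace ℝ (Fin n) → ℝ) (hF : Differentiable ℝ F)
    (x : EuclideanSpace ℝ (Fin n)) (hx : x ∈ X)
    (z : EuclideanSpace ℝ (Fin n))
    (p : EuclideanSpace ℝ (Fin n)) (hp : p ∈ X)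
    (hproj : ∀ y ∈ X, ‖x - β⁻¹ • gradient F x - p‖ ≤ ‖x - β⁻¹ • gradient F x - y‖) :
    ‖β • (x - p)‖ ^ 2 ≤
      -4 * β * sInf ((fun y => ⟪z, y - x⟫ + β / 2 * ‖y - x‖ ^ 2) '' X)
        + 2 * ‖gradient F x - z‖ ^ 2 := by
  set g := gradient F x with hg
  set v := x - p with hv
  -- variational inequality for the projection
  have hproj2 : ⟪(x - β⁻¹ • g) - p, x - p⟫ ≤ 0 := by
    haveI : Nonempty X := ⟨⟨x, hx⟩⟩
    have heq : ‖(x - β⁻¹ • g) - p‖ = ⨅ w : X, ‖(x - β⁻¹ • g) - w‖ := by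
      have hb : BddBelow (Set.range fun w : X => ‖(x - β⁻¹ • g) - (w : EuclideanSpace ℝ (Fin n))‖) := by
        refine ⟨0, ?_⟩
        rintro t ⟨w, rfl⟩
        exact norm_nonneg _
      apply le_antisymm
      · exact le_ciInf fun w => hproj w w.2
      · exact ciInf_le hb ⟨p, hp⟩
    exact (norm_eq_iInf_iff_real_inner_le_zero hXconv hp).1 heq x hx
  have key : β * ‖v‖ ^ 2 ≤ ⟪g, v⟫ := by
    have h1 : (x - β⁻¹ • g) - p = v - β⁻¹ • g := by rw [hv]; abel
    rw [h1, ← hv, inner_sub_left, real_inner_smul_left,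
      real_inner_self_eq_norm_sq] at hproj2
    have h2 : ‖v‖ ^ 2 ≤ β⁻¹ * ⟪g, v⟫ := by linarith
    have h3 := mul_le_mul_of_nonneg_left h2 hβ.le
    rwa [← mul_assoc, mul_inv_cancel₀ hβ.ne', one_mul] at h3
  -- lower bound on the infimum using the midpoint of x and p
  set f : EuclideanSpace ℝ (Fin n) → ℝ := fun y => ⟪z, y - x⟫ + β / 2 * ‖y - x‖ ^ 2
  have hbdd : BddBelow (f '' X) := by
    refine ⟨-(‖z‖ ^ 2) / (2 * β), ?_⟩
    rintro t ⟨y, hy, rfl⟩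
    have hcs : |⟪z, y - x⟫| ≤ ‖z‖ * ‖y - x‖ := abs_real_inner_le_norm z (y - x)
    have := neg_abs_le ⟪z, y - x⟫
    have h2 : (0:ℝ) ≤ ‖y - x‖ := norm_nonneg _
    simp only [f]
    rw [div_le_iff₀ (by positivity)]
    nlinarith [sq_nonneg (β * ‖y - x‖ - ‖z‖)]
  set y0 : EuclideanSpace ℝ (Fin n) := (1/2 : ℝ) • x + (1/2 : ℝ) • p with hy0
  have hy0X : y0 ∈ X := hXconv hx hp (by norm_num) (by norm_num) (by norm_num)
  have hy0x : y0 - x = -((1/2 : ℝ) • v) := by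
    rw [hy0, hv]
    module
  have hval : f y0 = -(1/2 : ℝ) * ⟪z, v⟫ + β / 8 * ‖v‖ ^ 2 := by
    simp only [f, hy0x, inner_neg_right, real_inner_smul_right, norm_neg, norm_smul]
    simp [norm_div]
    ring
  have hinf : sInf (f '' X) ≤ -(1/2 : ℝ) * ⟪z, v⟫ + β / 8 * ‖v‖ ^ 2 := by
    rw [← hval]
    exact csInf_le hbdd ⟨y0, hy0X, rfl⟩
  -- final algebraic computation
  have hcs2 : ⟪g - z, v⟫ ≤ ‖g - z‖ * ‖v‖ := real_inner_le_norm _ _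
  have hsplit : ⟪g - z, v⟫ = ⟪g, v⟫ - ⟪z, v⟫ := inner_sub_left g z v
  have hnorm : ‖β • v‖ = β * ‖v‖ := by
    rw [norm_smul, Real.norm_eq_abs, abs_of_pos hβ]
  rw [hnorm]
  nlinarith [sq_nonneg (β * ‖v‖ - 2 * ‖g - z‖), norm_nonneg v, norm_nonneg (g - z),
    mul_le_mul_of_nonneg_left hinf (by linarith : (0:ℝ) ≤ 4 * β), key, hcs2]
end
end

section
/- If X ⊆ ℝ^d is convex with diameter at most D_X and ‖∇F(x)‖ ≤ L for all x ∈ X, then the Frank-Wolfe gap is bounded by (L/β + D_X) times the norm of the gradient mapping: g_X(x, ∇F(x)) ≤ (L/β + D_X)·‖G_X(x, ∇F(x), β)‖ for all x ∈ X. -/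
open scoped RealInnerProductSpace BigOperators

noncomputable section

/-
The projection `p` of `x - β⁻¹ ∇F(x)` onto `X` satisfies the variational inequality
`⟪x - β⁻¹ ∇F(x) - p, y - p⟫ ≤ 0` for `y ∈ X`, i.e. `⟪∇F(x), p - y⟫ ≤ β ⟪x - p, p - y⟫`.
Splitting `⟪∇F(x), x - y⟫ = ⟪∇F(x), x - p⟫ + ⟪∇F(x), p - y⟫` and applying Cauchy–Schwarz to both
terms bounds the gap by `(‖∇F(x)‖ + β ‖p - y‖) ‖x - p‖ ≤ (L/β + D) ‖β (x - p)‖`.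
-/

section Projection

variable {E : Type*} [NormedAddCommGroup E] [InnerProductSpace ℝ E]

theorem real_inner_sub_le_zero_of_forall_norm_sub_le {K : Set E} (hK : Convex ℝ K) {u v : E}
    (hv : v ∈ K) (hmin : ∀ w ∈ K, ‖u - v‖ ≤ ‖u - w‖) : ∀ w ∈ K, ⟪u - v, w - v⟫ ≤ 0 := by
  have : Nonempty K := ⟨⟨v, hv⟩⟩
  refine (norm_eq_iInf_iff_real_inner_le_zero hK hv).1 (le_antisymm ?_ ?_)
  · exact le_ciInf fun w => hmin w w.2
  · exact ciInf_le (f := fun w : K => ‖u - (w : E)‖) ⟨0, by rintro _ ⟨w, rfl⟩; exact norm_nonneg _⟩ ⟨v, hv⟩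

theorem inner_sub_le_smul_inner_of_proj {β : ℝ} (hβ : 0 < β) {g x p y : E}
    (hvi : ⟪x - β⁻¹ • g - p, y - p⟫ ≤ 0) : ⟪g, p - y⟫ ≤ β * ⟪x - p, p - y⟫ := by
  have hsplit : ⟪x - β⁻¹ • g - p, y - p⟫ = β⁻¹ * ⟪g, p - y⟫ - ⟪x - p, p - y⟫ := by
    rw [show x - β⁻¹ • g - p = (x - p) - β⁻¹ • g by abel, inner_sub_left, real_inner_smul_left,
      ← neg_sub p y, inner_neg_right, inner_neg_right]
    ring
  rw [hsplit, sub_nonpos, inv_mul_le_iff₀ hβ] at hvi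
  exact hvi

theorem inner_sub_le_of_proj {K : Set E} (hK : Convex ℝ K) {β : ℝ} (hβ : 0 < β) {g x p y : E}
    (hp : p ∈ K) (hproj : ∀ z ∈ K, ‖x - β⁻¹ • g - p‖ ≤ ‖x - β⁻¹ • g - z‖) (hy : y ∈ K) :
    ⟪g, x - y⟫ ≤ (‖g‖ + β * ‖p - y‖) * ‖x - p‖ := by
  have hvi := real_inner_sub_le_zero_of_forall_norm_sub_le hK hp hproj y hy
  calc ⟪g, x - y⟫ = ⟪g, x - p⟫ + ⟪g, p - y⟫ := by rw [← inner_add_right, sub_add_sub_cancel]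
    _ ≤ ‖g‖ * ‖x - p‖ + β * (‖x - p‖ * ‖p - y‖) := by
        gcongr
        · exact real_inner_le_norm g (x - p)
        · exact (inner_sub_le_smul_inner_of_proj hβ hvi).trans
            (mul_le_mul_of_nonneg_left (real_inner_le_norm _ _) hβ.le)
    _ = (‖g‖ + β * ‖p - y‖) * ‖x - p‖ := by ring

end Projection

theorem stmt2_general {n : ℕ} (X : Set (EuclideanSpace ℝ (Fin n)))
    (hXconv : Convex ℝ X)
    (D : ℝ) (hD : ∀ a ∈ X, ∀ b ∈ X, ‖a - b‖ ≤ D)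
    (β : ℝ) (hβ : 0 < β)
    (F : EuclideanSpace ℝ (Fin n) → ℝ)
    (L : ℝ) (hL : ∀ y ∈ X, ‖gradient F y‖ ≤ L)
    (x : EuclideanSpace ℝ (Fin n)) (hx : x ∈ X)
    (p : EuclideanSpace ℝ (Fin n)) (hp : p ∈ X)
    (hproj : ∀ y ∈ X, ‖x - β⁻¹ • gradient F x - p‖ ≤ ‖x - β⁻¹ • gradient F x - y‖) :
    sSup ((fun y => ⟪gradient F x, x - y⟫) '' X) ≤ (L / β + D) * ‖β • (x - p)‖ := by
  have hD0 : 0 ≤ D := (norm_nonneg _).trans (hD x hx x hx)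
  have hL0 : 0 ≤ L := (norm_nonneg _).trans (hL x hx)
  have hrhs : (L / β + D) * ‖β • (x - p)‖ = (L + β * D) * ‖x - p‖ := by
    rw [norm_smul, Real.norm_of_nonneg hβ.le]
    field_simp
  rw [hrhs]
  refine Real.sSup_le ?_ (by positivity)
  rintro _ ⟨y, hy, rfl⟩
  refine (inner_sub_le_of_proj hXconv hβ hp hproj hy).trans ?_
  gcongr
  · exact hL x hx
  · exact hD p hp y hy

/-- If `X ⊆ ℝ^d` is convex with diameter at most `D` and `‖∇F(y)‖ ≤ L` for all
`y ∈ X`, then the Frank-Wolfe gap is bounded as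
`g_X(x, ∇F(x)) ≤ (L/β + D)·‖G_X(x, ∇F(x), β)‖` for all `x ∈ X`. -/
theorem stmt2 {n : ℕ} (X : Set (EuclideanSpace ℝ (Fin n)))
    (hXne : X.Nonempty) (hXcp : IsCompact X) (hXconv : Convex ℝ X)
    (D : ℝ) (hD : ∀ a ∈ X, ∀ b ∈ X, ‖a - b‖ ≤ D)
    (β : ℝ) (hβ : 0 < β)
    (F : EuclideanSpace ℝ (Fin n) → ℝ) (hF : Differentiable ℝ F)
    (L : ℝ) (hL : ∀ y ∈ X, ‖gradient F y‖ ≤ L)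
    (x : EuclideanSpace ℝ (Fin n)) (hx : x ∈ X)
    (p : EuclideanSpace ℝ (Fin n)) (hp : p ∈ X)
    (hproj : ∀ y ∈ X, ‖x - β⁻¹ • gradient F x - p‖ ≤ ‖x - β⁻¹ • gradient F x - y‖) :
    sSup ((fun y => ⟪gradient F x, x - y⟫) '' X) ≤ (L / β + D) * ‖β • (x - p)‖ :=
  stmt2_general X hXconv D hD β hβ F L hL x hx p hp hproj
end
end

section
/- Let f_i : ℝ^{d_i} → ℝ^{d_{i-1}} for i = 1,…,T be continuously differentiable, where each f_i is L_{f_i}-Lipschitz and each ∇f_i is L_{∇f_i}-Lipschitz. Then the gradient of the composition F = f_1 ∘ f_2 ∘ ⋯ ∘ f_T is Lipschitz continuous with constant L_{∇F} = Σ_{j=1}^T [ L_{∇f_j} · (Π_{l=1}^{j-1} L_{f_l}) · (Π_{l=j+1}^T L_{f_l}²) ]. -/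
open scoped BigOperators

noncomputable section

/-- The nested composition `f 0 ∘ f 1 ∘ ⋯ ∘ f (k-1)`, mapping `ℝ^{d_k} → ℝ^{d_0}`. -/
def nestedComp (d : ℕ → ℕ)
    (f : ∀ i : ℕ, EuclideanSpace ℝ (Fin (d (i + 1))) → EuclideanSpace ℝ (Fin (d i))) :
    ∀ k : ℕ, EuclideanSpace ℝ (Fin (d k)) → EuclideanSpace ℝ (Fin (d 0))
  | 0 => id
  | k + 1 => nestedComp d f k ∘ f k

/-!
The chain rule gives `D(g ∘ h)(x) = Dg(h x) ∘ Dh(x)`, and a pointwise composition `x ↦ A x ∘ B x`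
of bounded Lipschitz operator fields is Lipschitz with constant `Lip A · sup ‖B‖ + sup ‖A‖ · Lip B`.
Here `x ↦ Dg(h x)` is `Lip Dg · Lip h`-Lipschitz and bounded by `Lip g`, while `Dh` is
bounded by `Lip h`, so `Lip D(g ∘ h) ≤ Lip Dg · (Lip h)² + Lip g · Lip Dh`. Peeling off the
innermost map of `f₀ ∘ ⋯ ∘ f_k` this way, the constants `C_k` satisfy
`C_{k+1} = L_{f_k}² C_k + L_{∇f_k} ∏_{l<k} L_{f_l}`, whose solution is the stated sum.
-/

open Finset NNReal

section OperatorFields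

variable {𝕜 X E F G : Type*} [NontriviallyNormedField 𝕜] [PseudoMetricSpace X]
  [SeminormedAddCommGroup E] [NormedSpace 𝕜 E] [SeminormedAddCommGroup F] [NormedSpace 𝕜 F]
  [SeminormedAddCommGroup G] [NormedSpace 𝕜 G]

theorem LipschitzWith.clm_comp {A : X → F →L[𝕜] G} {B : X → E →L[𝕜] F} {KA KB MA MB : ℝ≥0}
    (hA : LipschitzWith KA A) (hB : LipschitzWith KB B)
    (hA_le : ∀ x, ‖A x‖ ≤ MA) (hB_le : ∀ x, ‖B x‖ ≤ MB) :
    LipschitzWith (KA * MB + MA * KB) fun x => (A x).comp (B x) := by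
  refine LipschitzWith.of_dist_le_mul fun x y => ?_
  have split : (A x).comp (B x) - (A y).comp (B y)
      = (A x - A y).comp (B x) + (A y).comp (B x - B y) := by
    simp only [ContinuousLinearMap.sub_comp, ContinuousLinearMap.comp_sub]
    abel
  rw [dist_eq_norm, split]
  calc ‖(A x - A y).comp (B x) + (A y).comp (B x - B y)‖
      ≤ ‖A x - A y‖ * ‖B x‖ + ‖A y‖ * ‖B x - B y‖ :=
        (norm_add_le _ _).trans
          (add_le_add (ContinuousLinearMap.opNorm_comp_le _ _)
            (ContinuousLinearMap.opNorm_comp_le _ _))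
    _ ≤ KA * dist x y * MB + MA * (KB * dist x y) := by
        rw [← dist_eq_norm, ← dist_eq_norm]
        gcongr
        exacts [hA.dist_le_mul x y, hB_le x, hA_le y, hB.dist_le_mul x y]
    _ = ↑(KA * MB + MA * KB) * dist x y := by push_cast; ring

end OperatorFields

section ChainRule

variable {𝕜 E F G : Type*} [NontriviallyNormedField 𝕜]
  [NormedAddCommGroup E] [NormedSpace 𝕜 E] [NormedAddCommGroup F] [NormedSpace 𝕜 F]
  [NormedAddCommGroup G] [NormedSpace 𝕜 G]

theorem LipschitzWith.fderiv_comp {g : F → G} {h : E → F} {Kg Kh Cg Ch : ℝ≥0}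
    (hg : Differentiable 𝕜 g) (hh : Differentiable 𝕜 h)
    (hg_lip : LipschitzWith Kg g) (hh_lip : LipschitzWith Kh h)
    (hg' : LipschitzWith Cg (fderiv 𝕜 g)) (hh' : LipschitzWith Ch (fderiv 𝕜 h)) :
    LipschitzWith (Cg * Kh ^ 2 + Kg * Ch) (fderiv 𝕜 (g ∘ h)) := by
  have chain : fderiv 𝕜 (g ∘ h) = fun x => (fderiv 𝕜 g (h x)).comp (fderiv 𝕜 h x) :=
    funext fun x => _root_.fderiv_comp x (hg (h x)) (hh x)
  rw [chain, sq, ← mul_assoc]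
  exact (hg'.comp hh_lip).clm_comp hh' (fun _ => norm_fderiv_le_of_lipschitz 𝕜 hg_lip)
    (fun _ => norm_fderiv_le_of_lipschitz 𝕜 hh_lip)

end ChainRule

def nestedDerivLipConst {R : Type*} [CommSemiring R] (K C : ℕ → R) (k : ℕ) : R :=
  ∑ j ∈ range k, C j * (∏ l ∈ range j, K l) * ∏ l ∈ Ico (j + 1) k, K l ^ 2

theorem nestedDerivLipConst_succ {R : Type*} [CommSemiring R] (K C : ℕ → R) (k : ℕ) :
    nestedDerivLipConst K C (k + 1)
      = nestedDerivLipConst K C k * K k ^ 2 + (∏ l ∈ range k, K l) * C k := by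
  have peel : ∀ j ∈ range k, C j * (∏ l ∈ range j, K l) * ∏ l ∈ Ico (j + 1) (k + 1), K l ^ 2
      = C j * (∏ l ∈ range j, K l) * (∏ l ∈ Ico (j + 1) k, K l ^ 2) * K k ^ 2 := fun j hj => by
    rw [prod_Ico_succ_top (mem_range.mp hj), ← mul_assoc]
  rw [nestedDerivLipConst, sum_range_succ, sum_congr rfl peel, ← sum_mul, Ico_self, prod_empty,
    mul_one, mul_comm (C k)]
  rfl

section Nested

variable {d : ℕ → ℕ}
  {f : ∀ i : ℕ, EuclideanSpace ℝ (Fin (d (i + 1))) → EuclideanSpace ℝ (Fin (d i))}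

theorem differentiable_nestedComp (hf : ∀ i, Differentiable ℝ (f i)) :
    ∀ k, Differentiable ℝ (nestedComp d f k)
  | 0 => differentiable_id
  | k + 1 => (differentiable_nestedComp hf k).comp (hf k)

theorem lipschitzWith_nestedComp {K : ℕ → ℝ≥0} (hf : ∀ i, LipschitzWith (K i) (f i)) :
    ∀ k, LipschitzWith (∏ l ∈ range k, K l) (nestedComp d f k)
  | 0 => by simpa [nestedComp] using LipschitzWith.id
  | k + 1 => by
    rw [prod_range_succ]
    exact (lipschitzWith_nestedComp hf k).comp (hf k)

theorem lipschitzWith_fderiv_nestedComp {K C : ℕ → ℝ≥0} (hf : ∀ i, Differentiable ℝ (f i))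
    (hf_lip : ∀ i, LipschitzWith (K i) (f i)) (hf' : ∀ i, LipschitzWith (C i) (fderiv ℝ (f i))) :
    ∀ k, LipschitzWith (nestedDerivLipConst K C k) (fderiv ℝ (nestedComp d f k))
  | 0 => by
    simp [nestedComp, nestedDerivLipConst]
  | k + 1 => by
    rw [nestedDerivLipConst_succ]
    exact LipschitzWith.fderiv_comp (differentiable_nestedComp hf k) (hf k)
      (lipschitzWith_nestedComp hf_lip k) (hf_lip k)
      (lipschitzWith_fderiv_nestedComp hf hf_lip hf' k) (hf' k)

end Nested

theorem stmt4_general (T : ℕ) (d : ℕ → ℕ)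
    (f : ∀ i : ℕ, EuclideanSpace ℝ (Fin (d (i + 1))) → EuclideanSpace ℝ (Fin (d i)))
    (Lf Lg : ℕ → ℝ) (hLf : ∀ i, 0 ≤ Lf i) (hLg : ∀ i, 0 ≤ Lg i)
    (hdiff : ∀ i, Differentiable ℝ (f i))
    (hlip : ∀ i, LipschitzWith (Lf i).toNNReal (f i))
    (hglip : ∀ i, LipschitzWith (Lg i).toNNReal (fderiv ℝ (f i))) :
    LipschitzWith
      (∑ j ∈ Finset.range T,
          Lg j * (∏ l ∈ Finset.range j, Lf l) * ∏ l ∈ Finset.Ico (j + 1) T, Lf l ^ 2).toNNReal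
      (fderiv ℝ (nestedComp d f T)) := by
  have const_eq : ∑ j ∈ range T, Lg j * (∏ l ∈ range j, Lf l) * ∏ l ∈ Ico (j + 1) T, Lf l ^ 2
      = nestedDerivLipConst (fun i => (Lf i).toNNReal) (fun i => (Lg i).toNNReal) T := by
    simp only [nestedDerivLipConst, NNReal.coe_sum, NNReal.coe_mul, NNReal.coe_prod,
      NNReal.coe_pow, Real.coe_toNNReal _ (hLf _), Real.coe_toNNReal _ (hLg _)]
  rw [const_eq, Real.toNNReal_coe]
  exact lipschitzWith_fderiv_nestedComp hdiff hlip hglip T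

/-- If each `f_i` is `L_{f_i}`-Lipschitz and each derivative `∇f_i` is
`L_{∇f_i}`-Lipschitz, then the derivative of the composition `F = f_1 ∘ ⋯ ∘ f_T` is
Lipschitz with constant `Σ_{j=1}^T L_{∇f_j}·(Π_{l<j} L_{f_l})·(Π_{l>j} L_{f_l}²)`
(here indexed from `0`, so `f j` plays the role of `f_{j+1}`). -/
theorem stmt4 (T : ℕ) (hT : 0 < T) (d : ℕ → ℕ) (hd0 : d 0 = 1)
    (f : ∀ i : ℕ, EuclideanSpace ℝ (Fin (d (i + 1))) → EuclideanSpace ℝ (Fin (d i)))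
    (Lf Lg : ℕ → ℝ) (hLf : ∀ i, 0 ≤ Lf i) (hLg : ∀ i, 0 ≤ Lg i)
    (hdiff : ∀ i, Differentiable ℝ (f i))
    (hlip : ∀ i, LipschitzWith (Lf i).toNNReal (f i))
    (hglip : ∀ i, LipschitzWith (Lg i).toNNReal (fderiv ℝ (f i))) :
    LipschitzWith
      (∑ j ∈ Finset.range T,
          Lg j * (∏ l ∈ Finset.range j, Lf l) * ∏ l ∈ Finset.Ico (j + 1) T, Lf l ^ 2).toNNReal
      (fderiv ℝ (nestedComp d f T)) :=
  stmt4_general T d f Lf Lg hLf hLg hdiff hlip hglip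
end
end

section
/- Fix β > 0 and a nonempty compact convex set X. The function η(x, z) := min_{y∈X} (⟨z, y-x⟩ + (β/2)‖y-x‖²) has gradient ∇η given pointwise by ∇_x η(x,z) = -z - β(y*(x,z) - x) and ∇_z η(x,z) = y*(x,z) - x where y*(x,z) is the unique minimizer, and this gradient is Lipschitz continuous in (x,z) with constant 2√((1+β)² + (1 + 1/(2β))²). -/
/-!
The objective `φ_{x,z}(y) = ⟨z, y - x⟩ + (β/2)‖y - x‖²` is smooth in `y` with gradient
`z + β(y - x)`, so a minimizer `w` over the convex set `X` satisfies the variational inequality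
`⟨z + β(w - x), y - w⟩ ≥ 0` for all `y ∈ X`. Adding the inequalities at two parameters `(x, z)`
and `(x', z')` gives `β‖y*(x,z) - y*(x',z')‖ ≤ β‖x - x'‖ + ‖z - z'‖`, which yields uniqueness of
the minimizer and, componentwise, the Lipschitz bound on `∇η`.

For the gradient (Danskin's theorem), compare `η(x',z') - η(x,z)` with the change of the objective
at a fixed point: testing with `y*(x,z)` bounds it from above and testing with `y*(x',z')` from
below, up to the linear term `⟨∇η(x,z), (x'-x, z'-z)⟩`. The two bounds differ by a multiple of
`‖y*(x',z') - y*(x,z)‖ · ‖(x'-x, z'-z)‖`, which is quadratic by the Lipschitz estimate.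
-/

open scoped RealInnerProductSpace BigOperators

noncomputable section

/-- The function `η(x,z) = min_{y∈X}(⟨z, y-x⟩ + (β/2)‖y-x‖²)`, viewed as a function on the
`L²`-product `ℝ^d × ℝ^d`. -/
def etaFun {n : ℕ} (X : Set (EuclideanSpace ℝ (Fin n))) (β : ℝ)
    (q : WithLp 2 (EuclideanSpace ℝ (Fin n) × EuclideanSpace ℝ (Fin n))) : ℝ :=
  sInf ((fun y => ⟪(WithLp.equiv 2 _ q).2, y - (WithLp.equiv 2 _ q).1⟫
    + β / 2 * ‖y - (WithLp.equiv 2 _ q).1‖ ^ 2) '' X)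

/-- The claimed gradient of `η` at `(x,z)`: `(-z - β(y*(x,z) - x), y*(x,z) - x)`. -/
def etaGrad {n : ℕ} (β : ℝ)
    (ystar : EuclideanSpace ℝ (Fin n) → EuclideanSpace ℝ (Fin n) → EuclideanSpace ℝ (Fin n))
    (q : WithLp 2 (EuclideanSpace ℝ (Fin n) × EuclideanSpace ℝ (Fin n))) :
    WithLp 2 (EuclideanSpace ℝ (Fin n) × EuclideanSpace ℝ (Fin n)) :=
  (WithLp.equiv 2 _).symm
    (-(WithLp.equiv 2 _ q).2
        - β • (ystar (WithLp.equiv 2 _ q).1 (WithLp.equiv 2 _ q).2 - (WithLp.equiv 2 _ q).1),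
      ystar (WithLp.equiv 2 _ q).1 (WithLp.equiv 2 _ q).2 - (WithLp.equiv 2 _ q).1)

lemma sq_add_mul_le_sq_mul {p r a b : ℝ} (hp : 0 ≤ p) (hr : 0 ≤ r) :
    (p * a + r * b) ^ 2 ≤ (p + r) ^ 2 * (a ^ 2 + b ^ 2) := by
  nlinarith [sq_nonneg (p * b - r * a),
    mul_nonneg (mul_nonneg hp hr) (add_nonneg (sq_nonneg a) (sq_nonneg b))]

lemma hasFDerivAt_of_norm_sub_le_mul_sq {𝕜 E G : Type*} [NontriviallyNormedField 𝕜]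
    [NormedAddCommGroup E] [NormedSpace 𝕜 E] [NormedAddCommGroup G] [NormedSpace 𝕜 G]
    {f : E → G} {f' : E →L[𝕜] G} {x : E} (C : ℝ)
    (h : ∀ y, ‖f y - f x - f' (y - x)‖ ≤ C * ‖y - x‖ ^ 2) : HasFDerivAt f f' x := by
  rw [hasFDerivAt_iff_isLittleO]
  refine (Asymptotics.IsBigO.of_bound C (Filter.Eventually.of_forall fun y => ?_)).trans_isLittleO
    (Asymptotics.isLittleO_pow_sub_sub x one_lt_two)
  simpa only [norm_pow, norm_norm] using h y

lemma IsMinOn.csInf_image_eq {α β : Type*} [ConditionallyCompleteLinearOrder β] {f : α → β}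
    {s : Set α} {a : α} (hf : IsMinOn f s a) (ha : a ∈ s) : sInf (f '' s) = f a :=
  IsLeast.csInf_eq ⟨Set.mem_image_of_mem f ha, Set.forall_mem_image.2 hf⟩

section Prox

variable {F : Type*} [NormedAddCommGroup F] [InnerProductSpace ℝ F]

def proxObjective (β : ℝ) (x z y : F) : ℝ := ⟪z, y - x⟫ + β / 2 * ‖y - x‖ ^ 2

lemma hasFDerivAt_proxObjective (β : ℝ) (x z y : F) :
    HasFDerivAt (proxObjective β x z) (innerSL ℝ (z + β • (y - x))) y := by
  have hsub := (hasFDerivAt_id (𝕜 := ℝ) y).sub_const x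
  refine (((innerSL ℝ z).hasFDerivAt.comp y hsub).add
    (hsub.norm_sq.const_mul (β / 2))).congr_fderiv ?_
  ext v
  simp only [ContinuousLinearMap.comp_id, add_apply, smul_apply, coe_innerSL_apply,
    inner_add_left, real_inner_smul_left, nsmul_eq_mul, smul_eq_mul, id_eq]
  ring

lemma proxObjective_sub_proxObjective (β : ℝ) (x z x' z' y : F) :
    proxObjective β x' z' y - proxObjective β x z y
      = ⟪-z - β • (y - x), x' - x⟫ + ⟪y - x, z' - z⟫
        + (β / 2 * ‖x' - x‖ ^ 2 - ⟪z' - z, x' - x⟫) := by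
  have hy : y - x' = (y - x) - (x' - x) := by abel
  rw [proxObjective, proxObjective, hy, norm_sub_sq_real, real_inner_comm (z' - z) (y - x)]
  simp only [inner_sub_left, inner_sub_right, inner_neg_left, real_inner_smul_left]
  ring

lemma IsMinOn.inner_nonneg_of_convex {X : Set F} (hX : Convex ℝ X) {β : ℝ} {x z w y : F}
    (hw : w ∈ X) (hmin : IsMinOn (proxObjective β x z) X w) (hy : y ∈ X) :
    0 ≤ ⟪z + β • (w - x), y - w⟫ :=
  hmin.localize.hasFDerivWithinAt_nonneg (hasFDerivAt_proxObjective β x z w).hasFDerivWithinAt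
    (sub_mem_posTangentConeAt_of_segment_subset (hX.segment_subset hw hy))

lemma mul_norm_sub_le_of_inner_nonneg {β : ℝ} {u₁ u₂ w₁ w₂ : F}
    (h₁ : 0 ≤ ⟪u₁ + β • w₁, w₂ - w₁⟫) (h₂ : 0 ≤ ⟪u₂ + β • w₂, w₁ - w₂⟫) :
    β * ‖w₁ - w₂‖ ≤ ‖u₁ - u₂‖ := by
  have key : β * ‖w₁ - w₂‖ ^ 2 ≤ ‖u₁ - u₂‖ * ‖w₁ - w₂‖ := by
    have h₂' : ⟪u₂ + β • w₂, w₁ - w₂⟫ = -⟪u₂ + β • w₂, w₂ - w₁⟫ := by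
      rw [← inner_neg_right, neg_sub]
    have hsum : ⟪u₁ + β • w₁, w₂ - w₁⟫ - ⟪u₂ + β • w₂, w₂ - w₁⟫
        = ⟪u₁ - u₂, w₂ - w₁⟫ - β * ‖w₁ - w₂‖ ^ 2 := by
      rw [← inner_sub_left,
        show u₁ + β • w₁ - (u₂ + β • w₂) = (u₁ - u₂) - β • (w₂ - w₁) by module,
        inner_sub_left, real_inner_smul_left, real_inner_self_eq_norm_sq, norm_sub_rev]
    have hcs : ⟪u₁ - u₂, w₂ - w₁⟫ ≤ ‖u₁ - u₂‖ * ‖w₁ - w₂‖ := by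
      rw [norm_sub_rev w₁ w₂]
      exact real_inner_le_norm _ _
    linarith
  rcases (norm_nonneg (w₁ - w₂)).eq_or_lt with h | h
  · rw [← h, mul_zero]
    exact norm_nonneg _
  · nlinarith

lemma IsMinOn.mul_norm_sub_le {X : Set F} (hX : Convex ℝ X) {β : ℝ} (hβ : 0 ≤ β)
    {x₁ z₁ x₂ z₂ w₁ w₂ : F} (hw₁ : w₁ ∈ X) (hw₂ : w₂ ∈ X)
    (hmin₁ : IsMinOn (proxObjective β x₁ z₁) X w₁) (hmin₂ : IsMinOn (proxObjective β x₂ z₂) X w₂) :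
    β * ‖w₁ - w₂‖ ≤ β * ‖x₁ - x₂‖ + ‖z₁ - z₂‖ := by
  have hu : ∀ x z w : F, z + β • (w - x) = (z - β • x) + β • w := fun x z w => by module
  have h := mul_norm_sub_le_of_inner_nonneg
    (hu x₁ z₁ w₁ ▸ hmin₁.inner_nonneg_of_convex hX hw₁ hw₂)
    (hu x₂ z₂ w₂ ▸ hmin₂.inner_nonneg_of_convex hX hw₂ hw₁)
  calc β * ‖w₁ - w₂‖ ≤ ‖(z₁ - z₂) - β • (x₁ - x₂)‖ := by
        rwa [show (z₁ - z₂) - β • (x₁ - x₂) = z₁ - β • x₁ - (z₂ - β • x₂) by module]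
    _ ≤ ‖z₁ - z₂‖ + ‖β • (x₁ - x₂)‖ := norm_sub_le _ _
    _ = β * ‖x₁ - x₂‖ + ‖z₁ - z₂‖ := by rw [norm_smul, Real.norm_of_nonneg hβ, add_comm]

lemma IsMinOn.abs_proxObjective_sub_sub_le {X : Set F} {β : ℝ} (hβ : 0 ≤ β)
    {x z x' z' w w' : F} (hw : w ∈ X) (hw' : w' ∈ X)
    (hmin : IsMinOn (proxObjective β x z) X w) (hmin' : IsMinOn (proxObjective β x' z') X w') :
    |proxObjective β x' z' w' - proxObjective β x z w
        - (⟪-z - β • (w - x), x' - x⟫ + ⟪w - x, z' - z⟫)|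
      ≤ ‖w' - w‖ * (β * ‖x' - x‖ + ‖z' - z‖) + (β / 2 * ‖x' - x‖ ^ 2 + ‖z' - z‖ * ‖x' - x‖) := by
  have hR : |β / 2 * ‖x' - x‖ ^ 2 - ⟪z' - z, x' - x⟫|
      ≤ β / 2 * ‖x' - x‖ ^ 2 + ‖z' - z‖ * ‖x' - x‖ := by
    have := abs_real_inner_le_norm (z' - z) (x' - x)
    rw [abs_le] at this ⊢
    constructor <;> nlinarith [sq_nonneg ‖x' - x‖]
  have hshift : ⟪-z - β • (w' - x), x' - x⟫ + ⟪w' - x, z' - z⟫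
      = ⟪-z - β • (w - x), x' - x⟫ + ⟪w - x, z' - z⟫
        + (⟪w' - w, z' - z⟫ - β * ⟪w' - w, x' - x⟫) := by
    rw [show -z - β • (w' - x) = (-z - β • (w - x)) - β • (w' - w) by module,
      show w' - x = (w - x) + (w' - w) by abel]
    simp only [inner_sub_left, inner_add_left, real_inner_smul_left]
    ring
  have hcross : |⟪w' - w, z' - z⟫ - β * ⟪w' - w, x' - x⟫|
      ≤ ‖w' - w‖ * (β * ‖x' - x‖ + ‖z' - z‖) := by
    have h₁ := abs_le.mp (abs_real_inner_le_norm (w' - w) (z' - z))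
    have h₂ := abs_le.mp (abs_real_inner_le_norm (w' - w) (x' - x))
    rw [abs_le]
    constructor <;> nlinarith [mul_le_mul_of_nonneg_left h₂.1 hβ, mul_le_mul_of_nonneg_left h₂.2 hβ]
  have hcross_nonneg : 0 ≤ ‖w' - w‖ * (β * ‖x' - x‖ + ‖z' - z‖) := by positivity
  have hupper : proxObjective β x' z' w' ≤ proxObjective β x' z' w := hmin' hw
  have hlower : proxObjective β x z w ≤ proxObjective β x z w' := hmin hw'
  have hΔw := proxObjective_sub_proxObjective β x z x' z' w
  have hΔw' := proxObjective_sub_proxObjective β x z x' z' w'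
  rw [abs_le] at hR hcross ⊢
  constructor <;> linarith [hR.1, hR.2, hcross.1, hcross.2]

end Prox

section Eta

variable {n : ℕ} {X : Set (EuclideanSpace ℝ (Fin n))} {β : ℝ}
  {ystar : EuclideanSpace ℝ (Fin n) → EuclideanSpace ℝ (Fin n) → EuclideanSpace ℝ (Fin n)}

lemma etaFun_eq_proxObjective (hmem : ∀ x z, ystar x z ∈ X)
    (hmin : ∀ x z, IsMinOn (proxObjective β x z) X (ystar x z))
    (q : WithLp 2 (EuclideanSpace ℝ (Fin n) × EuclideanSpace ℝ (Fin n))) :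
    etaFun X β q = proxObjective β q.fst q.snd (ystar q.fst q.snd) :=
  (hmin _ _).csInf_image_eq (hmem _ _)

lemma hasGradientAt_etaFun (hβ : 0 < β) (hmem : ∀ x z, ystar x z ∈ X)
    (hmin : ∀ x z, IsMinOn (proxObjective β x z) X (ystar x z))
    (hlip : ∀ x z x' z', β * ‖ystar x z - ystar x' z'‖ ≤ β * ‖x - x'‖ + ‖z - z'‖)
    (q : WithLp 2 (EuclideanSpace ℝ (Fin n) × EuclideanSpace ℝ (Fin n))) :
    HasGradientAt (etaFun X β) (etaGrad β ystar q) q := by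
  rw [hasGradientAt_iff_hasFDerivAt]
  refine hasFDerivAt_of_norm_sub_le_mul_sq ((β + 1) ^ 2 / β + β / 2 + 1) fun q' => ?_
  set r := ‖q' - q‖
  have ha : ‖q'.fst - q.fst‖ ≤ r := WithLp.norm_fst_le _ (q' - q)
  have hb : ‖q'.snd - q.snd‖ ≤ r := WithLp.norm_snd_le _ (q' - q)
  have hm : ‖ystar q'.fst q'.snd - ystar q.fst q.snd‖ ≤ (β + 1) * r / β := by
    rw [le_div_iff₀ hβ]
    nlinarith [hlip q'.fst q'.snd q.fst q.snd]
  rw [InnerProductSpace.toDual_apply_apply, WithLp.prod_inner_apply,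
    etaFun_eq_proxObjective hmem hmin, etaFun_eq_proxObjective hmem hmin, Real.norm_eq_abs]
  calc _ ≤ _ := (hmin _ _).abs_proxObjective_sub_sub_le hβ.le (hmem _ _) (hmem _ _) (hmin _ _)
    _ ≤ (β + 1) * r / β * (β * r + r) + (β / 2 * r ^ 2 + r * r) := by gcongr
    _ = ((β + 1) ^ 2 / β + β / 2 + 1) * r ^ 2 := by field_simp; ring

lemma lipschitzWith_etaGrad (hβ : 0 < β)
    (hlip : ∀ x z x' z', β * ‖ystar x z - ystar x' z'‖ ≤ β * ‖x - x'‖ + ‖z - z'‖) :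
    LipschitzWith (2 * √((1 + β) ^ 2 + (1 + 1 / (2 * β)) ^ 2)).toNNReal (etaGrad β ystar) := by
  refine LipschitzWith.of_dist_le_mul fun q q' => ?_
  rw [Real.coe_toNNReal _ (by positivity), dist_eq_norm, dist_eq_norm]
  set a := ‖q.fst - q'.fst‖
  set b := ‖q.snd - q'.snd‖
  set s := (ystar q.fst q.snd - q.fst) - (ystar q'.fst q'.snd - q'.fst)
  have hβs : β * ‖s‖ ≤ 2 * (β * a) + b := by
    have : ‖s‖ ≤ ‖ystar q.fst q.snd - ystar q'.fst q'.snd‖ + a := by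
      have hsplit : s = (ystar q.fst q.snd - ystar q'.fst q'.snd) - (q.fst - q'.fst) := by
        simp only [s]
        abel
      rw [hsplit]
      exact norm_sub_le _ _
    nlinarith [hlip q.fst q.snd q'.fst q'.snd]
  have hs : ‖s‖ ≤ 2 * (1 * a + 1 / (2 * β) * b) := by
    rw [← mul_le_mul_iff_right₀ hβ]
    field_simp
    linarith
  have ht : ‖(q'.snd - q.snd) - β • s‖ ≤ 2 * (β * a + 1 * b) := by
    calc _ ≤ ‖q'.snd - q.snd‖ + ‖β • s‖ := norm_sub_le _ _
      _ = b + β * ‖s‖ := by rw [norm_sub_rev, norm_smul, Real.norm_of_nonneg hβ.le]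
      _ ≤ _ := by linarith
  have hgrad : ‖etaGrad β ystar q - etaGrad β ystar q'‖ ^ 2
      = ‖(q'.snd - q.snd) - β • s‖ ^ 2 + ‖s‖ ^ 2 := by
    rw [WithLp.prod_norm_sq_eq_of_L2]
    congr 3
    show -q.snd - β • (ystar q.fst q.snd - q.fst)
      - (-q'.snd - β • (ystar q'.fst q'.snd - q'.fst)) = _
    module
  have hq : ‖q - q'‖ ^ 2 = a ^ 2 + b ^ 2 := WithLp.prod_norm_sq_eq_of_L2 _
  refine (pow_le_pow_iff_left₀ (norm_nonneg _) (by positivity) two_ne_zero).mp ?_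
  calc _ = ‖(q'.snd - q.snd) - β • s‖ ^ 2 + ‖s‖ ^ 2 := hgrad
    _ ≤ (2 * (β * a + 1 * b)) ^ 2 + (2 * (1 * a + 1 / (2 * β) * b)) ^ 2 := by gcongr
    _ ≤ 2 ^ 2 * ((β + 1) ^ 2 * (a ^ 2 + b ^ 2))
          + 2 ^ 2 * ((1 + 1 / (2 * β)) ^ 2 * (a ^ 2 + b ^ 2)) := by
      rw [mul_pow, mul_pow]
      gcongr
      exacts [sq_add_mul_le_sq_mul hβ.le zero_le_one,
        sq_add_mul_le_sq_mul zero_le_one (by positivity)]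
    _ = _ := by
      rw [mul_pow, mul_pow, Real.sq_sqrt (by positivity), hq]
      ring

end Eta

theorem stmt6_general {n : ℕ} (X : Set (EuclideanSpace ℝ (Fin n)))
    (hXconv : Convex ℝ X)
    (β : ℝ) (hβ : 0 < β)
    (ystar : EuclideanSpace ℝ (Fin n) → EuclideanSpace ℝ (Fin n) → EuclideanSpace ℝ (Fin n))
    (hmem : ∀ x z, ystar x z ∈ X)
    (hmin : ∀ x z, IsMinOn (fun y => ⟪z, y - x⟫ + β / 2 * ‖y - x‖ ^ 2) X (ystar x z)) :
    (∀ x z y, y ∈ X → IsMinOn (fun y' => ⟪z, y' - x⟫ + β / 2 * ‖y' - x‖ ^ 2) X y →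
        y = ystar x z) ∧
      (∀ q, HasGradientAt (etaFun X β) (etaGrad β ystar q) q) ∧
      LipschitzWith (2 * Real.sqrt ((1 + β) ^ 2 + (1 + 1 / (2 * β)) ^ 2)).toNNReal
        (etaGrad β ystar) := by
  have hlip : ∀ x z x' z', β * ‖ystar x z - ystar x' z'‖ ≤ β * ‖x - x'‖ + ‖z - z'‖ :=
    fun x z x' z' => IsMinOn.mul_norm_sub_le hXconv hβ.le (hmem x z) (hmem x' z') (hmin x z)
      (hmin x' z')
  refine ⟨fun x z y hy hminy => ?_, hasGradientAt_etaFun hβ hmem hmin hlip,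
    lipschitzWith_etaGrad hβ hlip⟩
  have h := IsMinOn.mul_norm_sub_le hXconv hβ.le hy (hmem x z) hminy (hmin x z)
  rw [sub_self, sub_self, norm_zero, mul_zero, add_zero] at h
  exact sub_eq_zero.mp (norm_le_zero_iff.mp (nonpos_of_mul_nonpos_right h hβ))

/-- For a nonempty compact convex set `X` and `β > 0`, the minimizer `y*(x,z)`
of `y ↦ ⟨z,y-x⟩ + (β/2)‖y-x‖²` over `X` is unique; `η` has gradient
`(-z - β(y*(x,z)-x), y*(x,z)-x)` at each point; and this gradient map is Lipschitz with
constant `2√((1+β)² + (1 + 1/(2β))²)` on the `L²`-product space. -/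
theorem stmt6 {n : ℕ} (X : Set (EuclideanSpace ℝ (Fin n)))
    (hXne : X.Nonempty) (hXcp : IsCompact X) (hXconv : Convex ℝ X)
    (β : ℝ) (hβ : 0 < β)
    (ystar : EuclideanSpace ℝ (Fin n) → EuclideanSpace ℝ (Fin n) → EuclideanSpace ℝ (Fin n))
    (hmem : ∀ x z, ystar x z ∈ X)
    (hmin : ∀ x z, IsMinOn (fun y => ⟪z, y - x⟫ + β / 2 * ‖y - x‖ ^ 2) X (ystar x z)) :
    (∀ x z y, y ∈ X → IsMinOn (fun y' => ⟪z, y' - x⟫ + β / 2 * ‖y' - x‖ ^ 2) X y →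
        y = ystar x z) ∧
      (∀ q, HasGradientAt (etaFun X β) (etaGrad β ystar q) q) ∧
      LipschitzWith (2 * Real.sqrt ((1 + β) ^ 2 + (1 + 1 / (2 * β)) ^ 2)).toNNReal
        (etaGrad β ystar) :=
  stmt6_general X hXconv β hβ ystar hmem hmin
end
end

section
/- Let u^{k+1} = (1-τ)u^k + τG + Jᵀ(v^{k+1} - v^k) be an update with f Lipschitz-smooth (∇f is L_{∇f}-Lipschitz) and f L_f-Lipschitz. Define Δ_G = f(v^k) - G, Δ_J = ∇f(v^k) - J, e = f(v^{k+1}) - f(v^k) - ⟨∇f(v^k), v^{k+1} - v^k⟩. Then ‖f(v^{k+1}) - u^{k+1}‖² ≤ (1-τ)‖f(v^k) - u^k‖² + τ²‖Δ_G‖² + [4L_f² + L_{∇f}‖f(v^k) - u^k‖ + ‖Δ_J‖²]·‖v^{k+1} - v^k‖² + r, where r = 2τ⟨Δ_G, e + (1-τ)(f(v^k) - u^k) + Δ_Jᵀ(v^{k+1} - v^k)⟩ + 2⟨Δ_Jᵀ(v^{k+1} - v^k), e + (1-τ)(f(v^k) - u^k)⟩. -/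
/-!
The residual of the linearized update splits as `f(v⁺) - u⁺ = e + (1-τ)(f(v)-u) + Δ_J(v⁺-v) + τΔ_G`,
with `e` the first-order Taylor remainder of `f` at `v`. Expanding the square produces `τ²‖Δ_G‖²`
and `r` verbatim, plus `‖e‖²`, `2(1-τ)⟪e, f(v)-u⟫`, `‖Δ_J(v⁺-v)‖²` and
`(1-τ)²‖f(v)-u‖² ≤ (1-τ)‖f(v)-u‖²`. The Lipschitz bound `‖e‖ ≤ 2L_f‖v⁺-v‖` controls `‖e‖²`,
while the cross term needs the quadratic Taylor bound `‖e‖ ≤ (L_{∇f}/2)‖v⁺-v‖²`.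
-/

open scoped RealInnerProductSpace NNReal

section Taylor

variable {E F : Type*} [NormedAddCommGroup E] [NormedSpace ℝ E]
  [NormedAddCommGroup F] [NormedSpace ℝ F] {f : E → F} {K : ℝ≥0}

/-- `t ↦ f (x + t • (y - x)) - f x - t • f'(x) (y - x)` vanishes at `0` and has derivative of norm
at most `K t ‖y - x‖²`, so it stays below `K t² ‖y - x‖² / 2`. -/
theorem norm_sub_sub_fderiv_le_of_lipschitzWith_fderiv (hf : Differentiable ℝ f)
    (hf' : LipschitzWith K (fderiv ℝ f)) (x y : E) :
    ‖f y - f x - fderiv ℝ f x (y - x)‖ ≤ K / 2 * ‖y - x‖ ^ 2 := by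
  set d := y - x
  let g : ℝ → F := fun t => f (x + t • d) - f x - t • fderiv ℝ f x d
  let g' : ℝ → F := fun t => fderiv ℝ f (x + t • d) d - fderiv ℝ f x d
  have hg : ∀ t, HasDerivAt g (g' t) t := fun t => by
    have hpath : HasDerivAt (fun t : ℝ => x + t • d) d t := by
      simpa using ((hasDerivAt_id t).smul_const d).const_add x
    exact (((hf _).hasFDerivAt.comp_hasDerivAt t hpath).sub_const (f x)).sub
      (by simpa using (hasDerivAt_id t).smul_const (fderiv ℝ f x d))
  have hB : ∀ t, HasDerivAt (fun t : ℝ => K / 2 * t ^ 2 * ‖d‖ ^ 2) (K * t * ‖d‖ ^ 2) t :=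
    fun t => (((hasDerivAt_pow 2 t).const_mul (K / 2 : ℝ)).mul_const (‖d‖ ^ 2)).congr_deriv
      (by push_cast; ring)
  have hg'_le : ∀ t ∈ Set.Ico (0 : ℝ) 1, ‖g' t‖ ≤ K * t * ‖d‖ ^ 2 := fun t ht => by
    calc ‖g' t‖ = ‖(fderiv ℝ f (x + t • d) - fderiv ℝ f x) d‖ := rfl
      _ ≤ ‖fderiv ℝ f (x + t • d) - fderiv ℝ f x‖ * ‖d‖ := ContinuousLinearMap.le_opNorm _ _
      _ ≤ K * ‖x + t • d - x‖ * ‖d‖ := by gcongr; exact hf'.norm_sub_le _ _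
      _ = K * t * ‖d‖ ^ 2 := by
        rw [add_sub_cancel_left, norm_smul, Real.norm_of_nonneg ht.1]
        ring
  have key := image_norm_le_of_norm_deriv_right_le_deriv_boundary
    (fun t _ => (hg t).continuousAt.continuousWithinAt) (fun t _ => (hg t).hasDerivWithinAt)
    (by simp [g]) hB hg'_le (Set.right_mem_Icc.2 zero_le_one)
  simpa [g, d] using key

theorem norm_sub_sub_fderiv_le_of_lipschitzWith (hf : LipschitzWith K f) (x y : E) :
    ‖f y - f x - fderiv ℝ f x (y - x)‖ ≤ 2 * K * ‖y - x‖ := by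
  calc ‖f y - f x - fderiv ℝ f x (y - x)‖ ≤ ‖f y - f x‖ + ‖fderiv ℝ f x (y - x)‖ :=
        norm_sub_le _ _
    _ ≤ K * ‖y - x‖ + K * ‖y - x‖ := by
        gcongr
        · exact hf.norm_sub_le y x
        · exact (ContinuousLinearMap.le_opNorm _ _).trans
            (by gcongr; exact norm_fderiv_le_of_lipschitz ℝ hf)
    _ = 2 * K * ‖y - x‖ := by ring

end Taylor

theorem norm_add_smul_add_add_smul_sq_le {F : Type*} [NormedAddCommGroup F]
    [InnerProductSpace ℝ F] (e d w g : F) {τ : ℝ} (hτ0 : 0 ≤ τ) (hτ1 : τ ≤ 1) :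
    ‖e + (1 - τ) • d + w + τ • g‖ ^ 2 ≤
      (1 - τ) * ‖d‖ ^ 2 + τ ^ 2 * ‖g‖ ^ 2 + (‖e‖ ^ 2 + 2 * ‖e‖ * ‖d‖ + ‖w‖ ^ 2)
        + (2 * τ * ⟪g, e + (1 - τ) • d + w⟫ + 2 * ⟪w, e + (1 - τ) • d⟫) := by
  have hexpand : ‖e + (1 - τ) • d + w + τ • g‖ ^ 2 =
      ‖e‖ ^ 2 + 2 * (1 - τ) * ⟪e, d⟫ + (1 - τ) ^ 2 * ‖d‖ ^ 2 + ‖w‖ ^ 2 + τ ^ 2 * ‖g‖ ^ 2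
        + (2 * τ * ⟪g, e + (1 - τ) • d + w⟫ + 2 * ⟪w, e + (1 - τ) • d⟫) := by
    simp only [norm_add_sq_real, norm_smul, real_inner_smul_right, mul_pow, Real.norm_eq_abs,
      sq_abs]
    rw [real_inner_comm g, real_inner_comm w]
    ring
  have hcross : (1 - τ) * ⟪e, d⟫ ≤ ‖e‖ * ‖d‖ :=
    calc (1 - τ) * ⟪e, d⟫ ≤ (1 - τ) * (‖e‖ * ‖d‖) :=
          mul_le_mul_of_nonneg_left (real_inner_le_norm e d) (by linarith)
      _ ≤ ‖e‖ * ‖d‖ := by nlinarith [mul_nonneg (norm_nonneg e) (norm_nonneg d)]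
  have hcontract : (1 - τ) ^ 2 * ‖d‖ ^ 2 ≤ (1 - τ) * ‖d‖ ^ 2 := by
    nlinarith [mul_nonneg (mul_nonneg (sub_nonneg.2 hτ1) hτ0) (sq_nonneg ‖d‖)]
  rw [hexpand]
  linarith

theorem stmt14_general {m n : ℕ}
    (f : EuclideanSpace ℝ (Fin m) → EuclideanSpace ℝ (Fin n))
    (Lf Lg : ℝ) (hLg : 0 ≤ Lg)
    (hdiff : Differentiable ℝ f)
    (hlip : LipschitzWith Lf.toNNReal f)
    (hglip : LipschitzWith Lg.toNNReal (fderiv ℝ f))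
    (τ : ℝ) (hτ : τ ∈ Set.Ioc (0 : ℝ) 1)
    (u G : EuclideanSpace ℝ (Fin n)) (v v' : EuclideanSpace ℝ (Fin m))
    (J : EuclideanSpace ℝ (Fin m) →L[ℝ] EuclideanSpace ℝ (Fin n)) :
    ‖f v' - ((1 - τ) • u + τ • G + J (v' - v))‖ ^ 2 ≤
      (1 - τ) * ‖f v - u‖ ^ 2 + τ ^ 2 * ‖f v - G‖ ^ 2
        + (4 * Lf ^ 2 + Lg * ‖f v - u‖ + ‖fderiv ℝ f v - J‖ ^ 2) * ‖v' - v‖ ^ 2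
        + (2 * τ * ⟪f v - G,
              (f v' - f v - (fderiv ℝ f v) (v' - v)) + (1 - τ) • (f v - u)
                + (fderiv ℝ f v - J) (v' - v)⟫
            + 2 * ⟪(fderiv ℝ f v - J) (v' - v),
                (f v' - f v - (fderiv ℝ f v) (v' - v)) + (1 - τ) • (f v - u)⟫) := by
  set e := f v' - f v - (fderiv ℝ f v) (v' - v)
  set D := f v - u
  set w := (fderiv ℝ f v - J) (v' - v)
  have hresidual :
      f v' - ((1 - τ) • u + τ • G + J (v' - v)) = e + (1 - τ) • D + w + τ • (f v - G) := by
    simp only [e, D, w, sub_apply]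
    module
  have he_quad : ‖e‖ ≤ Lg / 2 * ‖v' - v‖ ^ 2 := by
    simpa only [Real.coe_toNNReal _ hLg] using
      norm_sub_sub_fderiv_le_of_lipschitzWith_fderiv hdiff hglip v v'
  have he_lin : ‖e‖ ^ 2 ≤ 4 * Lf ^ 2 * ‖v' - v‖ ^ 2 := by
    have hK : (Lf.toNNReal : ℝ) ^ 2 ≤ Lf ^ 2 := by
      simpa only [sq_abs] using pow_le_pow_left₀ (NNReal.coe_nonneg _) (Real.coe_toNNReal_le Lf) 2
    calc ‖e‖ ^ 2 ≤ (2 * Lf.toNNReal * ‖v' - v‖) ^ 2 :=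
          pow_le_pow_left₀ (norm_nonneg _) (norm_sub_sub_fderiv_le_of_lipschitzWith hlip v v') 2
      _ ≤ 4 * Lf ^ 2 * ‖v' - v‖ ^ 2 := by nlinarith [sq_nonneg ‖v' - v‖]
  have hw : ‖w‖ ^ 2 ≤ ‖fderiv ℝ f v - J‖ ^ 2 * ‖v' - v‖ ^ 2 := by
    rw [← mul_pow]
    exact pow_le_pow_left₀ (norm_nonneg _) (ContinuousLinearMap.le_opNorm _ _) 2
  have hed : 2 * ‖e‖ * ‖D‖ ≤ Lg * ‖D‖ * ‖v' - v‖ ^ 2 := by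
    linarith [mul_le_mul_of_nonneg_right he_quad (norm_nonneg D)]
  rw [hresidual]
  refine (norm_add_smul_add_add_smul_sq_le e D w _ hτ.1.le hτ.2).trans ?_
  linarith

/-- Recursion for the inner-function estimation error of the linearized
moving-average update `u⁺ = (1-τ)u + τG + J(v⁺ - v)`:
`‖f(v⁺) - u⁺‖² ≤ (1-τ)‖f(v) - u‖² + τ²‖Δ_G‖² + [4L_f² + L_{∇f}‖f(v)-u‖ + ‖Δ_J‖²]‖v⁺-v‖² + r`,
where `Δ_G = f(v) - G`, `Δ_J = ∇f(v) - J`, `e = f(v⁺) - f(v) - ∇f(v)(v⁺-v)` and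
`r = 2τ⟨Δ_G, e + (1-τ)(f(v)-u) + Δ_J(v⁺-v)⟩ + 2⟨Δ_J(v⁺-v), e + (1-τ)(f(v)-u)⟩`. -/
theorem stmt14 {m n : ℕ}
    (f : EuclideanSpace ℝ (Fin m) → EuclideanSpace ℝ (Fin n))
    (Lf Lg : ℝ) (hLf : 0 ≤ Lf) (hLg : 0 ≤ Lg)
    (hdiff : Differentiable ℝ f)
    (hlip : LipschitzWith Lf.toNNReal f)
    (hglip : LipschitzWith Lg.toNNReal (fderiv ℝ f))
    (τ : ℝ) (hτ : τ ∈ Set.Ioc (0 : ℝ) 1)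
    (u G : EuclideanSpace ℝ (Fin n)) (v v' : EuclideanSpace ℝ (Fin m))
    (J : EuclideanSpace ℝ (Fin m) →L[ℝ] EuclideanSpace ℝ (Fin n)) :
    ‖f v' - ((1 - τ) • u + τ • G + J (v' - v))‖ ^ 2 ≤
      (1 - τ) * ‖f v - u‖ ^ 2 + τ ^ 2 * ‖f v - G‖ ^ 2
        + (4 * Lf ^ 2 + Lg * ‖f v - u‖ + ‖fderiv ℝ f v - J‖ ^ 2) * ‖v' - v‖ ^ 2
        + (2 * τ * ⟪f v - G,
              (f v' - f v - (fderiv ℝ f v) (v' - v)) + (1 - τ) • (f v - u)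
                + (fderiv ℝ f v - J) (v' - v)⟫
            + 2 * ⟪(fderiv ℝ f v - J) (v' - v),
                (f v' - f v - (fderiv ℝ f v) (v' - v)) + (1 - τ) • (f v - u)⟫) :=
  stmt14_general f Lf Lg hLg hdiff hlip hglip τ hτ u G v v' J
end
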